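/- arXiv:2402.09254 — 2 statements merged into one kernel-verified Lean document; each statement's English description precedes it below -/
import Mathlib

section
/- Let G be a graph on n ≥ 3 vertices with e(G) ≥ 1, and suppose f is as above with e(G) = ⌈w(f)/(n−2)⌉ (equality in the super-path bound). Then the maximum and minimum degree of G differ by at most 1. -/
/-!
The second vertices of `m` internally disjoint super-paths from `u` to `v` are distinct
neighbours of `u` other than `v`, so `f(uv) + [uv ∈ E] ≤ min (d u) (d v)`. Summing over ordered
pairs gives `2 w(f) + 2 e(G) ≤ ∑_{x ≠ y} min (d x) (d y)`. Since
`2 min a b = a + b - |a - b|`, this sum is `2 (n - 1) e(G) - ½ ∑_{x, y} |d x - d y|`, and a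
degree gap of at least `2` makes `∑_{x, y} |d x - d y| ≥ 4 (n - 1)`. Hence
`w(f) < (n - 2) (e(G) - 1)`, so `⌈w(f) / (n - 2)⌉ < e(G)`.
-/

open SimpleGraph Finset

variable {V : Type*}

/-- A graph is `k`-connected if it has at least `k+1` vertices and removing any
set of at most `k-1` vertices leaves it connected. -/
def KConnected [Fintype V] (G : SimpleGraph V) (k : ℕ) : Prop :=
  k + 1 ≤ Fintype.card V ∧
    ∀ U : Finset V, U.card ≤ k - 1 → (G.induce ((↑U : Set V)ᶜ)).Connected

/-- Two walks from `u` to `v` are internally disjoint if they share only `u` and `v`. -/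
def InternallyDisjoint {G : SimpleGraph V} {u v : V} (p q : G.Walk u v) : Prop :=
  ∀ x : V, x ∈ p.support → x ∈ q.support → x = u ∨ x = v

/-- A walk is monochromatic under an edge-colouring `c` if all its edges get one colour. -/
def Monochromatic {G : SimpleGraph V} (c : Sym2 V → ℕ) {u v : V} (p : G.Walk u v) : Prop :=
  ∃ col : ℕ, ∀ e ∈ p.edges, c e = col

/-- There exist `m` pairwise internally disjoint super-paths (paths of length ≥ 2)
connecting `u` and `v`. -/
def HasDisjointSuperPaths (G : SimpleGraph V) (u v : V) (m : ℕ) : Prop :=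
  ∃ P : Fin m → G.Walk u v,
    (∀ i, (P i).IsPath ∧ 2 ≤ (P i).length) ∧
    Pairwise (fun i j => InternallyDisjoint (P i) (P j))

/-- There exist `m` pairwise internally disjoint monochromatic super-paths
connecting `u` and `v`. -/
def HasDisjointMonoSuperPaths (G : SimpleGraph V) (c : Sym2 V → ℕ) (u v : V) (m : ℕ) : Prop :=
  ∃ P : Fin m → G.Walk u v,
    (∀ i, (P i).IsPath ∧ 2 ≤ (P i).length ∧ Monochromatic c (P i)) ∧
    Pairwise (fun i j => InternallyDisjoint (P i) (P j))

/-- An edge-colouring is monochromatic `k`-connected if any two distinct vertices are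
connected by `k` pairwise internally disjoint monochromatic paths. -/
def MonoKConnected (G : SimpleGraph V) (k : ℕ) (c : Sym2 V → ℕ) : Prop :=
  ∀ u v : V, u ≠ v → ∃ P : Fin k → G.Walk u v,
    (∀ i, (P i).IsPath ∧ Monochromatic c (P i)) ∧
    Pairwise (fun i j => InternallyDisjoint (P i) (P j))

/-- The monochromatic `k`-connection number: the maximum number of colours in a
monochromatic `k`-connected edge-colouring. -/
noncomputable def mck (G : SimpleGraph V) (k : ℕ) : ℕ :=
  sSup {r : ℕ | ∃ c : Sym2 V → ℕ, MonoKConnected G k c ∧ (c '' G.edgeSet).ncard = r}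

open Classical in
/-- `m_G(u,v)`: `min(deg u, deg v) - 1` if `uv` is an edge, `min(deg u, deg v)` otherwise. -/
noncomputable def mDeg (G : SimpleGraph V) (u v : V) : ℕ :=
  if G.Adj u v then min (G.neighborSet u).ncard (G.neighborSet v).ncard - 1
  else min (G.neighborSet u).ncard (G.neighborSet v).ncard

namespace Finset

variable {ι M : Type*} [DecidableEq ι]

lemma sum_offDiag_add_sum_diag [AddCommMonoid M] (s : Finset ι) (g : ι × ι → M) :
    ∑ p ∈ s.offDiag, g p + ∑ i ∈ s, g (i, i) = ∑ p ∈ s ×ˢ s, g p := by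
  rw [← diag_union_offDiag, sum_union (disjoint_diag_offDiag s), sum_diag, add_comm]

lemma sum_offDiag_sym2Mk [AddCommMonoid M] (s : Finset ι) (g : Sym2 ι → M) :
    ∑ p ∈ s.offDiag, g s(p.1, p.2) = 2 • ∑ e ∈ s.sym2 with ¬ e.IsDiag, g e := by
  have hmaps : ∀ p ∈ s.offDiag, s(p.1, p.2) ∈ {e ∈ s.sym2 | ¬ e.IsDiag} := fun p hp => by
    rw [mem_filter, mk_mem_sym2_iff]
    exact ⟨⟨(mem_offDiag.1 hp).1, (mem_offDiag.1 hp).2.1⟩, not_isDiag_mk_of_mem_offDiag hp⟩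
  rw [← sum_fiberwise_of_maps_to hmaps, smul_sum]
  refine sum_congr rfl fun e he => ?_
  induction e using Sym2.ind with
  | _ a b =>
    obtain ⟨hab, hne⟩ := mem_filter.1 he
    rw [mk_mem_sym2_iff] at hab
    rw [Sym2.mk_isDiag_iff] at hne
    have hfiber : {p ∈ s.offDiag | s(p.1, p.2) = s(a, b)} = {(a, b), (b, a)} := by
      ext ⟨x, y⟩
      simp only [mem_filter, mem_offDiag, Sym2.eq_iff, mem_insert, mem_singleton, Prod.mk.injEq]
      grind
    rw [hfiber, sum_pair fun h => hne (Prod.ext_iff.1 h).1, Sym2.eq_swap, two_nsmul]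

-- Every `x` has `|d x - d u| + |d x - d v| ≥ 2`; this is collected once from the row of each
-- `x ∉ {u, v}` and once more, for every `x`, from the rows of `u` and `v` together.
lemma four_mul_card_sub_one_le_sum_abs_sub [Fintype ι] (d : ι → ℤ) {u v : ι}
    (h : d v + 2 ≤ d u) :
    4 * ((Fintype.card ι : ℤ) - 1) ≤ ∑ x, ∑ y, |d x - d y| := by
  have huv : u ≠ v := by rintro rfl; omega
  let T x := |d x - d u| + |d x - d v|
  have hT x : 2 ≤ T x := by
    show 2 ≤ |d x - d u| + |d x - d v|
    have := abs_sub_le (d u) (d x) (d v)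
    have := abs_sub_comm (d u) (d x)
    have := le_abs_self (d u - d v)
    omega
  have hrow x : T x ≤ ∑ y, |d x - d y| := by
    show |d x - d u| + |d x - d v| ≤ _
    rw [← sum_pair huv (f := fun y => |d x - d y|)]
    exact sum_le_sum_of_subset_of_nonneg (subset_univ _) fun _ _ _ => abs_nonneg _
  have hrows : ∑ x ∈ {u, v}, ∑ y, |d x - d y| = ∑ y, T y := by
    rw [sum_pair huv, ← sum_add_distrib]
    exact sum_congr rfl fun y _ => by simp only [T, abs_sub_comm (d y)]
  have hcard : #({u, v} : Finset ι)ᶜ + 2 = Fintype.card ι := by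
    rw [← card_pair huv, card_compl_add_card]
  calc 4 * ((Fintype.card ι : ℤ) - 1)
      = #({u, v} : Finset ι)ᶜ • 2 + #(univ : Finset ι) • 2 := by
        rw [card_univ, ← hcard]; push_cast; ring
    _ ≤ ∑ x ∈ ({u, v} : Finset ι)ᶜ, T x + ∑ y, T y :=
        add_le_add (card_nsmul_le_sum _ _ _ fun x _ => hT x)
          (card_nsmul_le_sum _ _ _ fun x _ => hT x)
    _ ≤ ∑ x ∈ ({u, v} : Finset ι)ᶜ, ∑ y, |d x - d y| + ∑ x ∈ {u, v}, ∑ y, |d x - d y| := by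
        rw [hrows]; gcongr with x; exact hrow x
    _ = ∑ x, ∑ y, |d x - d y| := sum_compl_add_sum _ _

lemma sum_offDiag_min_add_le [Fintype ι] (d : ι → ℤ) {u v : ι} (h : d v + 2 ≤ d u) :
    ∑ p ∈ univ.offDiag, min (d p.1) (d p.2) + 2 * ((Fintype.card ι : ℤ) - 1)
      ≤ ((Fintype.card ι : ℤ) - 1) * ∑ x, d x := by
  have hdiag := sum_offDiag_add_sum_diag univ fun p : ι × ι => min (d p.1) (d p.2)
  simp only [min_self, univ_product_univ, Fintype.sum_prod_type] at hdiag
  have htwo_min : ∀ x y, 2 * min (d x) (d y) = d x + d y - |d x - d y| := fun x y => by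
    linarith [min_add_max (d x) (d y), max_sub_min_eq_abs' (d x) (d y)]
  have hsum : ∑ x, ∑ y, 2 * min (d x) (d y)
      = 2 * (Fintype.card ι : ℤ) * ∑ x, d x - ∑ x, ∑ y, |d x - d y| := by
    simp only [htwo_min, sum_sub_distrib, sum_add_distrib, sum_const, card_univ, nsmul_eq_mul,
      ← mul_sum]
    ring
  simp only [← mul_sum] at hsum
  linarith [four_mul_card_sub_one_le_sum_abs_sub d h]

end Finset

lemma HasDisjointSuperPaths.add_ite_adj_le_degree [Fintype V] [DecidableEq V]
    {G : SimpleGraph V} [DecidableRel G.Adj] {u v : V} {m : ℕ}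
    (h : HasDisjointSuperPaths G u v m) :
    m + (if G.Adj u v then 1 else 0) ≤ G.degree u := by
  obtain ⟨P, hP, hdisj⟩ := h
  have hlen i : 2 ≤ (P i).length := (hP i).2
  have hnil i : ¬ (P i).Nil := by
    rw [← Walk.length_eq_zero_iff]; have := hlen i; omega
  have hsnd_ne i : (P i).snd ≠ v := fun hi => by
    have := ((hP i).1.getVert_eq_end_iff (by have := hlen i; omega)).1 hi
    have := hlen i; omega
  have hadj_snd : ∀ i, G.Adj u (P i).snd := fun i => Walk.adj_snd (hnil i)
  have hinj : Function.Injective fun i => (P i).snd := by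
    intro i j (hij : (P i).snd = (P j).snd)
    by_contra hne
    have hj : (P i).snd ∈ (P j).support := hij ▸ (P j).getVert_mem_support 1
    rcases hdisj hne _ ((P i).getVert_mem_support 1) hj with h | h
    · exact (hadj_snd i).ne h.symm
    · exact hsnd_ne i h
  have hm : m ≤ #((G.neighborFinset u).erase v) := by
    simpa using card_le_card_of_injOn (s := univ) _
      (fun i _ => mem_erase.2 ⟨hsnd_ne i, (mem_neighborFinset _ _ _).2 (hadj_snd i)⟩) hinj.injOn
  split_ifs with hadj
  · have := card_erase_add_one ((mem_neighborFinset _ _ _).2 hadj)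
    rw [card_neighborFinset_eq_degree] at this
    omega
  · rwa [erase_eq_of_notMem (by simpa using hadj), card_neighborFinset_eq_degree] at hm

namespace SimpleGraph

variable {G : SimpleGraph V} [Fintype V] [DecidableEq V] [DecidableRel G.Adj]

lemma sum_offDiag_ite_adj :
    ∑ p ∈ (univ : Finset V).offDiag, (if G.Adj p.1 p.2 then 1 else 0) = 2 * #G.edgeFinset := by
  have hdiag := sum_offDiag_add_sum_diag univ fun p : V × V => if G.Adj p.1 p.2 then 1 else 0
  simp only [SimpleGraph.irrefl, if_false, sum_const_zero, add_zero] at hdiag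
  rw [hdiag, sum_product, ← sum_degrees_eq_twice_card_edges]
  refine sum_congr rfl fun x _ => ?_
  rw [sum_boole, Nat.cast_id, ← card_neighborFinset_eq_degree, neighborFinset_eq_filter]

lemma two_mul_sum_add_two_mul_card_edgeFinset_le_sum_min_degree (f : Sym2 V → ℕ)
    (hf : ∀ u v : V, u ≠ v → HasDisjointSuperPaths G u v (f s(u, v))) :
    2 * ∑ e ∈ univ.filter (fun e : Sym2 V => ¬ e.IsDiag), f e + 2 * #G.edgeFinset
      ≤ ∑ p ∈ (univ : Finset V).offDiag, min (G.degree p.1) (G.degree p.2) := by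
  rw [← sum_offDiag_ite_adj, ← smul_eq_mul, ← sym2_univ, ← sum_offDiag_sym2Mk,
    ← sum_add_distrib]
  refine sum_le_sum fun p hp => ?_
  have hne := (mem_offDiag.1 hp).2.2
  refine le_min (hf p.1 p.2 hne).add_ite_adj_le_degree ?_
  rw [Sym2.eq_swap]
  simp only [G.adj_comm p.1 p.2]
  exact (hf p.2 p.1 hne.symm).add_ite_adj_le_degree

end SimpleGraph

theorem stmt15_general [Fintype V] [DecidableEq V] (G : SimpleGraph V) (hn : 3 ≤ Fintype.card V)
    (f : Sym2 V → ℕ)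
    (hf : ∀ u v : V, u ≠ v → HasDisjointSuperPaths G u v (f s(u, v)))
    (heq : (G.edgeSet.ncard : ℤ) =
      ⌈((∑ e ∈ Finset.univ.filter (fun e : Sym2 V => ¬ e.IsDiag), f e : ℕ) : ℚ) /
        ((Fintype.card V : ℚ) - 2)⌉) :
    ∀ u v : V, (G.neighborSet u).ncard ≤ (G.neighborSet v).ncard + 1 := by
  classical
  intro u v
  simp only [← coe_neighborFinset, Set.ncard_coe_finset, card_neighborFinset_eq_degree]
  by_contra! hgap
  rw [← coe_edgeFinset, Set.ncard_coe_finset] at heq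
  set W := ∑ e ∈ Finset.univ.filter (fun e : Sym2 V => ¬ e.IsDiag), f e
  have hpairs : (2 * W + 2 * #G.edgeFinset : ℤ)
      ≤ ∑ p ∈ (univ : Finset V).offDiag, min (G.degree p.1 : ℤ) (G.degree p.2) := by
    exact_mod_cast two_mul_sum_add_two_mul_card_edgeFinset_le_sum_min_degree f hf
  have hdegrees := sum_offDiag_min_add_le (fun x => (G.degree x : ℤ)) (u := u) (v := v)
    (by omega)
  have hsum : (∑ x, G.degree x : ℤ) = 2 * #G.edgeFinset := by
    exact_mod_cast G.sum_degrees_eq_twice_card_edges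
  simp only [hsum] at hdegrees
  have hW : (W : ℤ) ≤ (#G.edgeFinset - 1) * (Fintype.card V - 2) := by linarith
  have hpos : (0 : ℚ) < Fintype.card V - 2 := by
    have : (3 : ℚ) ≤ Fintype.card V := by exact_mod_cast hn
    linarith
  have hceil := Int.ceil_le.2 ((div_le_iff₀ hpos).2 (by exact_mod_cast hW) :
    (W : ℚ) / ((Fintype.card V : ℚ) - 2) ≤ ((#G.edgeFinset - 1 : ℤ) : ℚ))
  omega

theorem stmt15 [Fintype V] [DecidableEq V] (G : SimpleGraph V) (hn : 3 ≤ Fintype.card V)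
    (he : 1 ≤ G.edgeSet.ncard) (f : Sym2 V → ℕ)
    (hf : ∀ u v : V, u ≠ v → HasDisjointSuperPaths G u v (f s(u, v)))
    (heq : (G.edgeSet.ncard : ℤ) =
      ⌈((∑ e ∈ Finset.univ.filter (fun e : Sym2 V => ¬ e.IsDiag), f e : ℕ) : ℚ) /
        ((Fintype.card V : ℚ) - 2)⌉) :
    ∀ u v : V, (G.neighborSet u).ncard ≤ (G.neighborSet v).ncard + 1 :=
  stmt15_general G hn f hf heq
end

section
/- Let G = K_{k,t} with t ≥ k ≥ 2 be the complete bipartite graph with parts X of size k and Y of size t. Then mc_k(K_{k,t}) = 1. -/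
open SimpleGraph Finset

variable {V : Type*}

/-!
If `u, v ∈ Y` then every `x ∈ X` is a neighbour of both, and the `k = |X|` internally disjoint
paths from `u` to `v` must each start with a different vertex of `X`; so each path meets `X` in
exactly one vertex and is `u – x – v`. Monochromatic paths of this shape force all edges at `x`
to share one colour, and a single monochromatic path between two vertices of `X` then identifies
these colours. Conversely `K_{k,t}` with `k ≤ t` has `k` internally disjoint paths between any two
vertices, so the constant colouring is admissible.
-/

section Walks

variable {G : SimpleGraph V} {u v : V}

lemma InternallyDisjoint.reverse {p q : G.Walk u v} (h : InternallyDisjoint p q) :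
    InternallyDisjoint p.reverse q.reverse := by
  intro x hp hq
  rw [Walk.support_reverse, List.mem_reverse] at hp hq
  exact (h x hp hq).symm

lemma eq_of_mem_support_of_pairwise_internallyDisjoint {ι : Type*} {P : ι → G.Walk u v}
    (hP : Pairwise fun i j => InternallyDisjoint (P i) (P j)) {w : V} {i j : ι}
    (hi : w ∈ (P i).support) (hj : w ∈ (P j).support) (hu : w ≠ u) (hv : w ≠ v) : i = j := by
  by_contra hij
  rcases hP hij w hi hj with h | h <;> contradiction

lemma Monochromatic.color_eq {c : Sym2 V → ℕ} {p : G.Walk u v} (hp : Monochromatic c p)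
    {e e' : Sym2 V} (he : e ∈ p.edges) (he' : e' ∈ p.edges) : c e = c e' := by
  obtain ⟨col, hcol⟩ := hp
  rw [hcol e he, hcol e' he']

lemma exists_internallyDisjoint_paths_of_adj_of_adj {ι : Type*} {f : ι → V}
    (hf : Function.Injective f) (huv : u ≠ v) (hu : ∀ i, G.Adj u (f i)) (hv : ∀ i, G.Adj (f i) v) :
    ∃ P : ι → G.Walk u v,
      (∀ i, (P i).IsPath) ∧ Pairwise fun i j => InternallyDisjoint (P i) (P j) := by
  refine ⟨fun i => .cons (hu i) (.cons (hv i) .nil), fun i => ?_, fun i j hij x hxi hxj => ?_⟩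
  · simp [Walk.isPath_def, (hu i).ne, (hv i).ne, huv]
  · simp only [Walk.support_cons, Walk.support_nil, List.mem_cons,
      List.not_mem_nil, or_false] at hxi hxj
    rcases hxi with rfl | rfl | rfl
    · exact .inl rfl
    · rcases hxj with h | h | h
      · exact .inl h
      · exact absurd (hf h) hij
      · exact .inr h
    · exact .inr rfl

lemma monoKConnected_const {k : ℕ}
    (h : ∀ u v : V, u ≠ v → ∃ P : Fin k → G.Walk u v,
      (∀ i, (P i).IsPath) ∧ Pairwise fun i j => InternallyDisjoint (P i) (P j))
    (col : ℕ) : MonoKConnected G k fun _ => col := by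
  intro u v huv
  obtain ⟨P, hP, hdisj⟩ := h u v huv
  exact ⟨P, fun i => ⟨hP i, col, fun _ _ => rfl⟩, hdisj⟩

lemma mck_eq_one {k : ℕ} (hE : G.edgeSet.Nonempty)
    (hconst : ∀ c, MonoKConnected G k c → ∀ e ∈ G.edgeSet, ∀ e' ∈ G.edgeSet, c e = c e')
    (hex : ∃ c, MonoKConnected G k c) : mck G k = 1 := by
  obtain ⟨e, he⟩ := hE
  have hncard : ∀ c, MonoKConnected G k c → (c '' G.edgeSet).ncard = 1 := fun c hc =>
    Set.ncard_eq_one.mpr ⟨c e, Set.eq_singleton_iff_unique_mem.mpr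
      ⟨Set.mem_image_of_mem c he, by rintro _ ⟨e', he', rfl⟩; exact hconst c hc e' he' e he⟩⟩
  have hS : {r : ℕ | ∃ c, MonoKConnected G k c ∧ (c '' G.edgeSet).ncard = r} = {1} := by
    refine Set.eq_singleton_iff_unique_mem.mpr ⟨?_, ?_⟩
    · obtain ⟨c, hc⟩ := hex
      exact ⟨c, hc, hncard c hc⟩
    · rintro _ ⟨c, hc, rfl⟩
      exact hncard c hc
  rw [mck, hS, csSup_singleton]

end Walks

section CompleteBipartite

variable {α β : Type*}

lemma completeBipartiteGraph.exists_eq_inl_of_adj_inr {y : β} {w : α ⊕ β}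
    (h : (completeBipartiteGraph α β).Adj (.inr y) w) : ∃ x, w = .inl x := by
  cases w <;> simp_all

lemma completeBipartiteGraph.exists_eq_inr_of_adj_inl {x : α} {w : α ⊕ β}
    (h : (completeBipartiteGraph α β).Adj (.inl x) w) : ∃ y, w = .inr y := by
  cases w <;> simp_all

lemma completeBipartiteGraph.exists_eq_of_mem_edgeSet {e : Sym2 (α ⊕ β)}
    (he : e ∈ (completeBipartiteGraph α β).edgeSet) : ∃ x y, e = s(.inl x, .inr y) := by
  induction e using Sym2.ind with
  | _ a b =>
    rcases a with x | y <;> rcases b with x' | y' <;> simp at he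
    · exact ⟨x, y', rfl⟩
    · exact ⟨x', y, Sym2.eq_swap⟩

/-- The direct edge, together with the paths `x – σ i – i – y` for `i ≠ x`. -/
lemma completeBipartiteGraph.exists_internallyDisjoint_paths_inl_inr (σ : α ↪ β) {x : α} {y : β}
    (hσ : σ x = y) : ∃ P : α → (completeBipartiteGraph α β).Walk (.inl x) (.inr y),
      (∀ i, (P i).IsPath) ∧ Pairwise fun i j => InternallyDisjoint (P i) (P j) := by
  classical
  have hadj (a : α) (b : β) : (completeBipartiteGraph α β).Adj (.inl a) (.inr b) := by simp
  have hσy {i} (hi : i ≠ x) : σ i ≠ y := hσ ▸ σ.injective.ne hi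
  refine ⟨fun i => if i = x then .cons (hadj x y) .nil else
    .cons (hadj x (σ i)) (.cons (hadj i (σ i)).symm (.cons (hadj i y) .nil)), fun i => ?_, ?_⟩
  · dsimp only
    split_ifs with hi
    · simp [Walk.isPath_def]
    · simp [Walk.isPath_def, Ne.symm hi, hσy hi]
  · intro i j hij w hwi hwj
    dsimp only at hwi hwj
    split_ifs at hwi hwj with hi hj hj
    all_goals simp only [Walk.support_cons, Walk.support_nil, List.mem_cons,
      List.not_mem_nil, or_false] at hwi hwj
    all_goals grind [σ.injective.eq_iff]

lemma completeBipartiteGraph.exists_internallyDisjoint_paths (σ : α ↪ β) {u v : α ⊕ β}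
    (huv : u ≠ v) : ∃ P : α → (completeBipartiteGraph α β).Walk u v,
      (∀ i, (P i).IsPath) ∧ Pairwise fun i j => InternallyDisjoint (P i) (P j) := by
  classical
  rcases u with x | y <;> rcases v with x' | y'
  · exact exists_internallyDisjoint_paths_of_adj_of_adj (Sum.inr_injective.comp σ.injective) huv
      (by simp) (by simp)
  · exact exists_internallyDisjoint_paths_inl_inr (σ.trans (Equiv.swap (σ x) y').toEmbedding)
      (by simp)
  · obtain ⟨P, hP, hdisj⟩ := exists_internallyDisjoint_paths_inl_inr
      (σ.trans (Equiv.swap (σ x') y).toEmbedding) (x := x') (y := y) (by simp)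
    exact ⟨fun i => (P i).reverse, fun i => (hP i).reverse, fun i j hij => (hdisj hij).reverse⟩
  · exact exists_internallyDisjoint_paths_of_adj_of_adj Sum.inl_injective huv (by simp) (by simp)

variable [Fintype α] {k : ℕ} {c : Sym2 (α ⊕ β) → ℕ}

lemma color_inl_eq_of_monoKConnected (hk : Fintype.card α ≤ k)
    (hc : MonoKConnected (completeBipartiteGraph α β) k c) (x : α) (y y' : β) :
    c s(.inl x, .inr y) = c s(.inl x, .inr y') := by
  obtain rfl | hyy' := eq_or_ne y y'
  · rfl
  obtain ⟨P, hP, hdisj⟩ := hc (.inr y) (.inr y') (by simpa using hyy')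
  have hnil i : ¬(P i).Nil := Walk.not_nil_of_ne (by simpa using hyy')
  choose f hf using fun i =>
    completeBipartiteGraph.exists_eq_inl_of_adj_inr (Walk.adj_snd (hnil i))
  have hf_mem i : .inl (f i) ∈ (P i).support := hf i ▸ Walk.getVert_mem_support _ _
  have hf_inj : Function.Injective f := fun i j hij =>
    eq_of_mem_support_of_pairwise_internallyDisjoint hdisj (hf_mem i) (hij ▸ hf_mem j)
      Sum.inl_ne_inr Sum.inl_ne_inr
  have hf_surj : Function.Surjective f :=
    ((Fintype.bijective_iff_injective_and_card f).mpr
      ⟨hf_inj, le_antisymm (by simpa using Fintype.card_le_of_injective f hf_inj)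
        (by simpa using hk)⟩).2
  obtain ⟨i, rfl⟩ := hf_surj x
  -- the penultimate vertex lies in `X`, so it is the second vertex of some `P j`, and `j = i`
  have hpen : (P i).penultimate = .inl (f i) := by
    obtain ⟨z, hz⟩ := completeBipartiteGraph.exists_eq_inl_of_adj_inr
      (Walk.adj_penultimate (hnil i)).symm
    obtain ⟨j, rfl⟩ := hf_surj z
    have hmem : .inl (f j) ∈ (P i).support := hz ▸ Walk.getVert_mem_support _ _
    rw [hz, eq_of_mem_support_of_pairwise_internallyDisjoint hdisj (hf_mem j) hmem
      Sum.inl_ne_inr Sum.inl_ne_inr]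
  have := (hP i).2.color_eq (Walk.mk_start_snd_mem_edges (hnil i))
    (Walk.mk_penultimate_end_mem_edges (hnil i))
  rwa [hf i, hpen, Sym2.eq_swap] at this

lemma color_eq_of_monoKConnected (hk : Fintype.card α ≤ k)
    (hc : MonoKConnected (completeBipartiteGraph α β) k c) (x x' : α) (y y' : β) :
    c s(.inl x, .inr y) = c s(.inl x', .inr y') := by
  obtain rfl | hxx' := eq_or_ne x x'
  · exact color_inl_eq_of_monoKConnected hk hc x y y'
  obtain ⟨P, hP, -⟩ := hc (.inl x) (.inl x') (by simpa using hxx')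
  have hk0 : 0 < k := (Fintype.card_pos_iff.mpr ⟨x⟩).trans_le hk
  let p := P ⟨0, hk0⟩
  have hnil : ¬p.Nil := Walk.not_nil_of_ne (by simpa using hxx')
  obtain ⟨y₁, hy₁⟩ := completeBipartiteGraph.exists_eq_inr_of_adj_inl (Walk.adj_snd hnil)
  obtain ⟨y₂, hy₂⟩ :=
    completeBipartiteGraph.exists_eq_inr_of_adj_inl (Walk.adj_penultimate hnil).symm
  have hp := (hP ⟨0, hk0⟩).2.color_eq (Walk.mk_start_snd_mem_edges hnil)
    (Walk.mk_penultimate_end_mem_edges hnil)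
  rw [hy₁, hy₂, Sym2.eq_swap (a := (.inr y₂ : α ⊕ β))] at hp
  rw [color_inl_eq_of_monoKConnected hk hc x y y₁, hp,
    color_inl_eq_of_monoKConnected hk hc x' y₂ y']

lemma color_eq_on_edgeSet_of_monoKConnected (hk : Fintype.card α ≤ k)
    (hc : MonoKConnected (completeBipartiteGraph α β) k c) :
    ∀ e ∈ (completeBipartiteGraph α β).edgeSet, ∀ e' ∈ (completeBipartiteGraph α β).edgeSet,
      c e = c e' := by
  intro e he e' he'
  obtain ⟨x, y, rfl⟩ := completeBipartiteGraph.exists_eq_of_mem_edgeSet he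
  obtain ⟨x', y', rfl⟩ := completeBipartiteGraph.exists_eq_of_mem_edgeSet he'
  exact color_eq_of_monoKConnected hk hc x x' y y'

end CompleteBipartite

theorem stmt19 (k t : ℕ) (hk : 2 ≤ k) (ht : k ≤ t) :
    mck (completeBipartiteGraph (Fin k) (Fin t)) k = 1 := by
  refine mck_eq_one ⟨s(.inl ⟨0, by omega⟩, .inr ⟨0, by omega⟩), by simp⟩
    (fun c hc => color_eq_on_edgeSet_of_monoKConnected (Fintype.card_fin k).le hc)
    ⟨_, monoKConnected_const (fun u v huv => ?_) 0⟩
  exact completeBipartiteGraph.exists_internallyDisjoint_paths (Fin.castLEEmb ht) huv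
end
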